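/- arXiv:2006.02344 — 6 statements merged into one kernel-verified Lean document; each statement's English description precedes it below -/
import Mathlib

section
/- Let 0 → L → M → N → 0 be a short exact sequence of A-modules. If L and N are vector-realisable, then M is vector-realisable. -/
section Realisable

variable {A : Type*} [CommRing A]

/-- `(m₁,…,mₙ)` is an admissible vector for the structure constants `c`,
where `c i s t` denotes `cᵗ_{is}`: `∑ᵢ cᵗ_{is} mᵢ = 0` for all `s, t`. -/
def AdmissibleVec {n d : ℕ} (c : Fin n → Fin d → Fin d → A)
    {M : Type*} [AddCommGroup M] [Module A M] (m : Fin n → M) : Prop :=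
  ∀ s t : Fin d, ∑ i, c i s t • m i = 0

/-- The submodule of admissible vectors. -/
def admissibleVecSub {n d : ℕ} (c : Fin n → Fin d → Fin d → A)
    (M : Type*) [AddCommGroup M] [Module A M] : Submodule A (Fin n → M) where
  carrier := {m | AdmissibleVec c m}
  add_mem' {x y} hx hy := fun s t => by
    simp only [Pi.add_apply, smul_add, Finset.sum_add_distrib, hx s t, hy s t, add_zero]
  zero_mem' := fun s t => by simp
  smul_mem' a x hx := fun s t => by
    simp only [Pi.smul_apply, smul_comm _ a, ← Finset.smul_sum, hx s t, smul_zero]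

/-- A vector is realisable if it lies in the image of the natural map
`Aⁿ_ad ⊗_A M → Mⁿ`, i.e. in the span of the vectors `(a₁ • x, …, aₙ • x)` with
`(a₁,…,aₙ)` an admissible vector of scalars. -/
def RealisableVec {n d : ℕ} (c : Fin n → Fin d → Fin d → A)
    {M : Type*} [AddCommGroup M] [Module A M] (m : Fin n → M) : Prop :=
  m ∈ Submodule.span A
    {v : Fin n → M | ∃ (a : Fin n → A) (x : M), AdmissibleVec c a ∧ v = fun i => a i • x}

/-- `M` is vector-realisable if every admissible vector over `M` is realisable. -/
def VectorRealisable {n d : ℕ} (c : Fin n → Fin d → Fin d → A)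
    (M : Type*) [AddCommGroup M] [Module A M] : Prop :=
  ∀ m : Fin n → M, AdmissibleVec c m → RealisableVec c m

/-- `(m_{st})` is an admissible matrix for the structure constants `c`:
`∑_t cᵗ_{is} m_{ut} = ∑_t cᵘ_{it} m_{ts}` for all `i, s, u`. -/
def AdmissibleMat {n d : ℕ} (c : Fin n → Fin d → Fin d → A)
    {M : Type*} [AddCommGroup M] [Module A M] (m : Fin d → Fin d → M) : Prop :=
  ∀ (i : Fin n) (s u : Fin d), ∑ t, c i s t • m u t = ∑ t, c i t u • m t s

/-- The submodule of admissible matrices. -/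
def admissibleMatSub {n d : ℕ} (c : Fin n → Fin d → Fin d → A)
    (M : Type*) [AddCommGroup M] [Module A M] : Submodule A (Fin d → Fin d → M) where
  carrier := {m | AdmissibleMat c m}
  add_mem' {x y} hx hy := fun i s u => by
    simp only [Pi.add_apply, smul_add, Finset.sum_add_distrib, hx i s u, hy i s u]
  zero_mem' := fun i s u => by simp
  smul_mem' a x hx := fun i s u => by
    simp only [Pi.smul_apply, smul_comm _ a, ← Finset.smul_sum, hx i s u]

/-- A matrix is realisable if it lies in the image of the natural map
`Mat_d(A)_ad ⊗_A M → Mat_d(M)`, i.e. in the span of the matrices `(a_{st} • x)` with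
`(a_{st})` an admissible matrix of scalars. -/
def RealisableMat {n d : ℕ} (c : Fin n → Fin d → Fin d → A)
    {M : Type*} [AddCommGroup M] [Module A M] (m : Fin d → Fin d → M) : Prop :=
  m ∈ Submodule.span A
    {v : Fin d → Fin d → M | ∃ (a : Fin d → Fin d → A) (x : M),
      AdmissibleMat c a ∧ v = fun s t => a s t • x}

/-- The submodule of realisable matrices. -/
def realisableMatSub {n d : ℕ} (c : Fin n → Fin d → Fin d → A)
    (M : Type*) [AddCommGroup M] [Module A M] : Submodule A (Fin d → Fin d → M) :=
  Submodule.span A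
    {v : Fin d → Fin d → M | ∃ (a : Fin d → Fin d → A) (x : M),
      AdmissibleMat c a ∧ v = fun s t => a s t • x}

/-- `M` is matrix-realisable if every admissible matrix over `M` is realisable. -/
def MatrixRealisable {n d : ℕ} (c : Fin n → Fin d → Fin d → A)
    (M : Type*) [AddCommGroup M] [Module A M] : Prop :=
  ∀ m : Fin d → Fin d → M, AdmissibleMat c m → RealisableMat c m

end Realisable

/-! Lift the image of an admissible `m : Mⁿ` in `Nⁿ`, realisable by hypothesis, to a realisable
`m' : Mⁿ` (realisable vectors are spanned by the `(aᵢ • x)ᵢ`, and `x` lifts along the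
surjection). Then `m - m'` is admissible with entries in `L`; as `L → M` is injective it is
admissible already over `L`, hence realisable there, and so is its image in `M`. -/

open Function

section RealisableVecSub

variable {A : Type*} [CommRing A] {n d : ℕ} (c : Fin n → Fin d → Fin d → A)
  {M N : Type*} [AddCommGroup M] [Module A M] [AddCommGroup N] [Module A N]

variable (M) in
def realisableVecSub : Submodule A (Fin n → M) :=
  Submodule.span A {v | ∃ (a : Fin n → A) (x : M), AdmissibleVec c a ∧ v = fun i => a i • x}

theorem realisableVecSub_le_admissibleVecSub : realisableVecSub c M ≤ admissibleVecSub c M := by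
  rw [realisableVecSub, Submodule.span_le]
  rintro _ ⟨a, x, ha, rfl⟩ s t
  simp_rw [← smul_assoc, ← Finset.sum_smul, ha s t, zero_smul]

theorem sum_smul_comp_linearMap (φ : M →ₗ[A] N) (m : Fin n → M) (s t : Fin d) :
    ∑ i, c i s t • (φ ∘ m) i = φ (∑ i, c i s t • m i) := by
  simp only [comp_apply, map_sum, map_smul]

theorem AdmissibleVec.map (φ : M →ₗ[A] N) {m : Fin n → M} (hm : AdmissibleVec c m) :
    AdmissibleVec c (φ ∘ m) := fun s t => by
  rw [sum_smul_comp_linearMap, hm s t, map_zero]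

theorem AdmissibleVec.of_map {φ : M →ₗ[A] N} (hφ : Injective φ) {m : Fin n → M}
    (hm : AdmissibleVec c (φ ∘ m)) : AdmissibleVec c m := fun s t =>
  hφ <| by rw [← sum_smul_comp_linearMap, hm s t, map_zero]

theorem map_realisableVecSub_le (φ : M →ₗ[A] N) :
    (realisableVecSub c M).map (φ.compLeft (Fin n)) ≤ realisableVecSub c N := by
  rw [realisableVecSub, Submodule.map_span_le]
  rintro _ ⟨a, x, ha, rfl⟩
  exact Submodule.subset_span ⟨a, φ x, ha, by ext i; simp⟩

theorem map_realisableVecSub_of_surjective {φ : M →ₗ[A] N} (hφ : Surjective φ) :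
    (realisableVecSub c M).map (φ.compLeft (Fin n)) = realisableVecSub c N := by
  refine (map_realisableVecSub_le c φ).antisymm ?_
  rw [realisableVecSub, Submodule.span_le]
  rintro _ ⟨a, y, ha, rfl⟩
  obtain ⟨x, rfl⟩ := hφ y
  exact ⟨fun i => a i • x, Submodule.subset_span ⟨a, x, ha, rfl⟩, by ext i; simp⟩

end RealisableVecSub

theorem vectorRealisable_of_shortExact_general
    {A : Type*} [CommRing A]
    {n d : ℕ}
    (c : Fin n → Fin d → Fin d → A)
    (L M N : Type*)
    [AddCommGroup L] [Module A L] [AddCommGroup M] [Module A M] [AddCommGroup N] [Module A N]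
    (f : L →ₗ[A] M) (g : M →ₗ[A] N)
    (hf : Function.Injective f) (hg : Function.Surjective g)
    (hfg : LinearMap.range f = LinearMap.ker g)
    (hL : VectorRealisable c L) (hN : VectorRealisable c N) :
    VectorRealisable c M := by
  intro m hm
  obtain ⟨m', hm', hgm'⟩ : ∃ m' ∈ realisableVecSub c M, g.compLeft (Fin n) m' = g ∘ m := by
    rw [← Submodule.mem_map, map_realisableVecSub_of_surjective c hg]
    exact hN _ (hm.map c g)
  have hker (i : Fin n) : m i - m' i ∈ LinearMap.range f := by
    rw [hfg, LinearMap.mem_ker, map_sub, sub_eq_zero]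
    exact (congrFun hgm' i).symm
  choose l hl using hker
  have hl_adm : AdmissibleVec c l := by
    refine AdmissibleVec.of_map c hf ?_
    rw [show f ∘ l = m - m' from funext hl]
    exact (admissibleVecSub c M).sub_mem hm (realisableVecSub_le_admissibleVecSub c hm')
  have hm_eq : m = m' + f.compLeft (Fin n) l := by
    ext i
    simp [hl]
  rw [hm_eq]
  exact add_mem hm' (map_realisableVecSub_le c f (Submodule.mem_map_of_mem (hL l hl_adm)))

/-- **Lemma 2.6 (vector version).** Let `A` be a Dedekind domain or a field, `Λ` an `A`-algebra
free of finite rank with basis `λ₁,…,λₙ`, `P` a `Λ`-module free of finite rank over `A` with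
basis `p₁,…,p_d`, and let `c` be the structure constants, `λᵢ • pₛ = ∑ₜ cᵗ_{is} pₜ`.
If `0 → L → M → N → 0` is a short exact sequence of `A`-modules and `L` and `N` are
vector-realisable, then so is `M`. -/
theorem vectorRealisable_of_shortExact
    {A : Type*} [CommRing A] [IsDomain A]
    (hA : IsDedekindDomain A ∨ IsField A)
    {n d : ℕ}
    (Λ : Type*) [Ring Λ] [Algebra A Λ]
    (P : Type*) [AddCommGroup P] [Module A P] [Module Λ P] [IsScalarTower A Λ P]
    (bΛ : Module.Basis (Fin n) A Λ) (bP : Module.Basis (Fin d) A P)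
    (c : Fin n → Fin d → Fin d → A)
    (hc : ∀ (i : Fin n) (s : Fin d), bΛ i • bP s = ∑ t, c i s t • bP t)
    (L M N : Type*)
    [AddCommGroup L] [Module A L] [AddCommGroup M] [Module A M] [AddCommGroup N] [Module A N]
    (f : L →ₗ[A] M) (g : M →ₗ[A] N)
    (hf : Function.Injective f) (hg : Function.Surjective g)
    (hfg : LinearMap.range f = LinearMap.ker g)
    (hL : VectorRealisable c L) (hN : VectorRealisable c N) :
    VectorRealisable c M :=
  vectorRealisable_of_shortExact_general c L M N f g hf hg hfg hL hN
end

section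
/- Let 0 → L → M → N → 0 be a short exact sequence of A-modules. If L and N are matrix-realisable, then M is matrix-realisable. -/
/-! Given an admissible matrix `m` over `M`, its image in `N` is realisable and lifts to a
realisable matrix `m'` over `M`. Then `m - m'` has entries in `L`, is admissible there because
`L → M` is injective, hence realisable; so `m = (m - m') + m'` is realisable. -/

namespace AdmissibleMat

variable {A : Type*} [CommRing A] {n d : ℕ} {c : Fin n → Fin d → Fin d → A}
  {M N : Type*} [AddCommGroup M] [Module A M] [AddCommGroup N] [Module A N]

theorem map {m : Fin d → Fin d → M} (hm : AdmissibleMat c m) (φ : M →ₗ[A] N) :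
    AdmissibleMat c fun s t => φ (m s t) := fun i s u => by
  simp only [← map_smul, ← map_sum, hm i s u]

theorem of_map_injective {φ : M →ₗ[A] N} (hφ : Function.Injective φ) {m : Fin d → Fin d → M}
    (hm : AdmissibleMat c fun s t => φ (m s t)) : AdmissibleMat c m := fun i s u =>
  hφ <| by simpa only [map_sum, map_smul] using hm i s u

end AdmissibleMat

namespace RealisableMat

variable {A : Type*} [CommRing A] {n d : ℕ} {c : Fin n → Fin d → Fin d → A}
  {M N : Type*} [AddCommGroup M] [Module A M] [AddCommGroup N] [Module A N]

theorem admissibleMat {m : Fin d → Fin d → M} (hm : RealisableMat c m) : AdmissibleMat c m := by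
  change m ∈ admissibleMatSub c M
  refine Submodule.span_le.2 ?_ hm
  rintro _ ⟨a, x, ha, rfl⟩ i s u
  simp only [smul_smul, ← Finset.sum_smul, ← smul_eq_mul, ha i s u]

theorem map {m : Fin d → Fin d → M} (hm : RealisableMat c m) (φ : M →ₗ[A] N) :
    RealisableMat c fun s t => φ (m s t) := by
  have := Submodule.mem_map_of_mem (f := (φ.compLeft (Fin d)).compLeft (Fin d)) hm
  rw [Submodule.map_span] at this
  refine Submodule.span_mono ?_ this
  rintro _ ⟨_, ⟨a, x, ha, rfl⟩, rfl⟩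
  exact ⟨a, φ x, ha, by ext; simp⟩

theorem exists_lift {φ : M →ₗ[A] N} (hφ : Function.Surjective φ) {m : Fin d → Fin d → N}
    (hm : RealisableMat c m) : ∃ m' : Fin d → Fin d → M,
      RealisableMat c m' ∧ (fun s t => φ (m' s t)) = m := by
  suffices m ∈ (realisableMatSub c M).map ((φ.compLeft (Fin d)).compLeft (Fin d)) by
    obtain ⟨m', hm', rfl⟩ := this
    exact ⟨m', hm', rfl⟩
  refine Submodule.span_le.2 ?_ hm
  rintro _ ⟨a, y, ha, rfl⟩
  obtain ⟨x, rfl⟩ := hφ y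
  exact ⟨_, Submodule.subset_span ⟨a, x, ha, rfl⟩, by ext; simp⟩

end RealisableMat

theorem matrixRealisable_of_shortExact_general
    {A : Type*} [CommRing A]
    {n d : ℕ}
    (c : Fin n → Fin d → Fin d → A)
    (L M N : Type*)
    [AddCommGroup L] [Module A L] [AddCommGroup M] [Module A M] [AddCommGroup N] [Module A N]
    (f : L →ₗ[A] M) (g : M →ₗ[A] N)
    (hf : Function.Injective f) (hg : Function.Surjective g)
    (hfg : LinearMap.range f = LinearMap.ker g)
    (hL : MatrixRealisable c L) (hN : MatrixRealisable c N) :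
    MatrixRealisable c M := by
  intro m hm
  obtain ⟨m', hm'_real, hm'⟩ := (hN _ (hm.map g)).exists_lift hg
  have h_ker (s t : Fin d) : m s t - m' s t ∈ LinearMap.range f := by
    rw [hfg, LinearMap.mem_ker, map_sub, sub_eq_zero]
    exact (congr_fun₂ hm' s t).symm
  choose l hl using h_ker
  have hl_adm : AdmissibleMat c l := AdmissibleMat.of_map_injective hf <| by
    simp only [hl]
    exact (admissibleMatSub c M).sub_mem hm hm'_real.admissibleMat
  have hm_eq : m = (fun s t => f (l s t)) + m' := by
    ext s t
    simp [hl]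
  rw [hm_eq]
  exact (realisableMatSub c M).add_mem ((hL l hl_adm).map f) hm'_real

/-- **Lemma 2.6 (matrix version).** Let `A` be a Dedekind domain or a field, `Λ` an `A`-algebra
free of finite rank with basis `λ₁,…,λₙ`, `P` a `Λ`-module free of finite rank over `A` with
basis `p₁,…,p_d`, and let `c` be the structure constants, `λᵢ • pₛ = ∑ₜ cᵗ_{is} pₜ`.
If `0 → L → M → N → 0` is a short exact sequence of `A`-modules and `L` and `N` are
matrix-realisable, then so is `M`. -/
theorem matrixRealisable_of_shortExact
    {A : Type*} [CommRing A] [IsDomain A]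
    (hA : IsDedekindDomain A ∨ IsField A)
    {n d : ℕ}
    (Λ : Type*) [Ring Λ] [Algebra A Λ]
    (P : Type*) [AddCommGroup P] [Module A P] [Module Λ P] [IsScalarTower A Λ P]
    (bΛ : Module.Basis (Fin n) A Λ) (bP : Module.Basis (Fin d) A P)
    (c : Fin n → Fin d → Fin d → A)
    (hc : ∀ (i : Fin n) (s : Fin d), bΛ i • bP s = ∑ t, c i s t • bP t)
    (L M N : Type*)
    [AddCommGroup L] [Module A L] [AddCommGroup M] [Module A M] [AddCommGroup N] [Module A N]
    (f : L →ₗ[A] M) (g : M →ₗ[A] N)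
    (hf : Function.Injective f) (hg : Function.Surjective g)
    (hfg : LinearMap.range f = LinearMap.ker g)
    (hL : MatrixRealisable c L) (hN : MatrixRealisable c N) :
    MatrixRealisable c M :=
  matrixRealisable_of_shortExact_general c L M N f g hf hg hfg hL hN
end

section
/- Let S be a multiplicatively closed subset of A containing 1, and let M be an A-module. Then the inclusions of Mat_d(M)_ad and of Mat_d(M)_real (the submodule of realisable matrices) into Mat_d(M) induce S⁻¹A-module isomorphisms S⁻¹(Mat_d(M)_ad) ≅ Mat_d(S⁻¹M)_ad and S⁻¹(Mat_d(M)_real) ≅ Mat_d(S⁻¹M)_real. In particular, if M is a matrix-realisable A-module then S⁻¹M is a matrix-realisable S⁻¹A-module. -/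
section Localisation

variable {A : Type*} [CommRing A] (S : Submonoid A)
variable (M : Type*) [AddCommGroup M] [Module A M]

/-- The natural componentwise map `Mat_d(M) → Mat_d(S⁻¹M)`. -/
noncomputable def matMk {d : ℕ} :
    (Fin d → Fin d → M) →ₗ[A] (Fin d → Fin d → LocalizedModule S M) where
  toFun m := fun s t => LocalizedModule.mkLinearMap S M (m s t)
  map_add' x y := by funext s t; exact map_add _ _ _
  map_smul' a x := by funext s t; simp

variable {n d : ℕ} (c : Fin n → Fin d → Fin d → A)

lemma algebraMap_smul_mk (r : A) (x : M) :
    algebraMap A (Localization S) r • (LocalizedModule.mkLinearMap S M x)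
      = LocalizedModule.mkLinearMap S M (r • x) := by
  rw [algebraMap_smul, map_smul]

/-- The componentwise localisation map sends admissible matrices to admissible matrices. -/
lemma matMk_mem_admissible :
    ∀ m ∈ admissibleMatSub c M,
      matMk S M m ∈ (admissibleMatSub
        (fun i s t => algebraMap A (Localization S) (c i s t))
        (LocalizedModule S M)).restrictScalars A := by
  intro m hm i s u
  show ∑ t, algebraMap A (Localization S) (c i s t) • LocalizedModule.mkLinearMap S M (m u t)
      = ∑ t, algebraMap A (Localization S) (c i t u) • LocalizedModule.mkLinearMap S M (m t s)
  simp only [algebraMap_smul_mk, ← map_sum]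
  rw [hm i s u]

/-- Admissible scalar matrices localise to admissible scalar matrices. -/
lemma admissibleMat_algebraMap (a : Fin d → Fin d → A) (ha : AdmissibleMat c a) :
    AdmissibleMat (fun i s t => algebraMap A (Localization S) (c i s t))
      (fun s t => algebraMap A (Localization S) (a s t)) := by
  intro i s u
  simp only [smul_eq_mul, ← map_mul, ← map_sum]
  rw [show ∑ t, c i s t * a u t = ∑ t, c i t u * a t s by
    simpa only [smul_eq_mul] using ha i s u]

/-- The componentwise localisation map sends realisable matrices to realisable matrices. -/
lemma matMk_mem_realisable :
    ∀ m ∈ realisableMatSub c M,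
      matMk S M m ∈ (realisableMatSub
        (fun i s t => algebraMap A (Localization S) (c i s t))
        (LocalizedModule S M)).restrictScalars A := by
  intro m hm
  simp only [Submodule.restrictScalars_mem]
  induction hm using Submodule.span_induction with
  | mem v hv =>
    obtain ⟨a, x, ha, rfl⟩ := hv
    refine Submodule.subset_span ⟨fun s t => algebraMap A (Localization S) (a s t),
      LocalizedModule.mkLinearMap S M x, admissibleMat_algebraMap S c a ha, ?_⟩
    funext s t
    show LocalizedModule.mkLinearMap S M (a s t • x) = _
    rw [algebraMap_smul_mk]
  | zero => rw [map_zero]; exact Submodule.zero_mem _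
  | add x y _ _ hx hy => rw [map_add]; exact Submodule.add_mem _ hx hy
  | smul a x _ hx =>
    rw [map_smul, ← algebraMap_smul (Localization S) a (matMk S M x)]
    exact Submodule.smul_mem _ _ hx

end Localisation

/-!
Admissibility of a matrix over `M` is the vanishing of an `A`-linear map `admissibilityDefect`
that is natural in `M`; since localisation is exact, `S⁻¹(Mat_d(M)_ad)` is the kernel of the
localised map, which is `Mat_d(S⁻¹M)_ad`. Realisable matrices are spanned by the matrices
`(a_{st} • x)` with `a` admissible; for `a'` admissible over `S⁻¹A` and `x' ∈ S⁻¹M`, clearing the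
denominators of `a'` (using the first part for `M = A`) and of `x'` turns `(a'_{st} • x')` into
such a generator over `A`. Matrix-realisability is the inclusion of the admissible submodule in
the realisable one, and localisation preserves inclusions.
-/

instance IsLocalizedModule.compLeft {R M N : Type*} [CommSemiring R] [AddCommMonoid M]
    [AddCommMonoid N] [Module R M] [Module R N] (S : Submonoid R) (f : M →ₗ[R] N)
    [IsLocalizedModule S f] (ι : Type*) [Finite ι] : IsLocalizedModule S (f.compLeft ι) :=
  IsLocalizedModule.pi S fun _ : ι => f

abbrev LinearMap.mapMat {R M N : Type*} [Semiring R] [AddCommMonoid M] [AddCommMonoid N]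
    [Module R M] [Module R N] {d : ℕ} (f : M →ₗ[R] N) :
    (Fin d → Fin d → M) →ₗ[R] (Fin d → Fin d → N) :=
  (f.compLeft (Fin d)).compLeft (Fin d)

theorem IsLocalizedModule.restrict_of_localized'_eq {R S M N : Type*} [CommSemiring R]
    [CommSemiring S] [Algebra R S] [AddCommMonoid M] [AddCommMonoid N] [Module R M]
    [Module R N] [Module S N] [IsScalarTower R S N] (p : Submonoid R) [IsLocalization p S]
    (f : M →ₗ[R] N) [IsLocalizedModule p f] {P : Submodule R M} {Q : Submodule S N}
    (h : P.localized' S p f = Q) (hf : ∀ x ∈ P, f x ∈ Q.restrictScalars R) :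
    IsLocalizedModule p (f.restrict hf) := by
  subst h
  exact Submodule.isLocalizedModule S p f P

section Defect

variable {R : Type*} [CommRing R] {n d : ℕ} (c : Fin n → Fin d → Fin d → R)
variable (M : Type*) [AddCommGroup M] [Module R M]

def admissibilityDefect : (Fin d → Fin d → M) →ₗ[R] (Fin n → Fin d → Fin d → M) where
  toFun m i s u := ∑ t, c i s t • m u t - ∑ t, c i t u • m t s
  map_add' x y := by
    ext
    simp only [Pi.add_apply, smul_add, Finset.sum_add_distrib]
    abel
  map_smul' a x := by ext; simp [smul_comm _ a, Finset.smul_sum, smul_sub]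

theorem admissibleMatSub_eq_ker :
    admissibleMatSub c M = LinearMap.ker (admissibilityDefect c M) := by
  ext m
  simp only [LinearMap.mem_ker, admissibilityDefect, LinearMap.coe_mk, AddHom.coe_mk, funext_iff,
    Pi.zero_apply, sub_eq_zero]
  rfl

theorem matrixRealisable_iff_le :
    MatrixRealisable c M ↔ admissibleMatSub c M ≤ realisableMatSub c M :=
  Iff.rfl

end Defect

section Localization

variable {R S M N : Type*} [CommRing R] [CommRing S] [Algebra R S]
  [AddCommGroup M] [Module R M] [AddCommGroup N] [Module R N] [Module S N] [IsScalarTower R S N]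
  {n d : ℕ} (c : Fin n → Fin d → Fin d → R)

theorem LinearMap.mapMat_smul_const (f : M →ₗ[R] N) (a : Fin d → Fin d → R) (x : M) :
    f.mapMat (fun s t => a s t • x) = fun s t => algebraMap R S (a s t) • f x := by
  ext s t
  simp [algebraMap_smul]

theorem admissibilityDefect_comp_mapMat (f : M →ₗ[R] N) :
    (admissibilityDefect (fun i s t => algebraMap R S (c i s t)) N).restrictScalars R ∘ₗ f.mapMat
      = f.mapMat.compLeft (Fin n) ∘ₗ admissibilityDefect c M := by
  refine LinearMap.ext fun m => funext fun i => funext fun s => funext fun u => ?_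
  simp [admissibilityDefect, algebraMap_smul]

theorem mapMat_mem_admissibleMatSub (f : M →ₗ[R] N) {m : Fin d → Fin d → M}
    (hm : m ∈ admissibleMatSub c M) :
    f.mapMat m ∈ admissibleMatSub (fun i s t => algebraMap R S (c i s t)) N := by
  intro i s u
  simpa [algebraMap_smul] using congrArg f (hm i s u)

variable (p : Submonoid R) [IsLocalization p S] (f : M →ₗ[R] N) [IsLocalizedModule p f]

theorem localized'_admissibleMatSub :
    (admissibleMatSub c M).localized' S p f.mapMat
      = admissibleMatSub (fun i s t => algebraMap R S (c i s t)) N := by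
  apply Submodule.restrictScalars_injective R
  have hmap : IsLocalizedModule.map p f.mapMat (f.mapMat.compLeft (Fin n))
      (admissibilityDefect c M)
      = (admissibilityDefect (fun i s t => algebraMap R S (c i s t)) N).restrictScalars R :=
    IsLocalizedModule.linearMap_ext p f.mapMat (f.mapMat.compLeft (Fin n))
      (by rw [IsLocalizedModule.map_comp, admissibilityDefect_comp_mapMat])
  rw [admissibleMatSub_eq_ker, admissibleMatSub_eq_ker,
    ← LinearMap.ker_localizedMap_eq_localized'_ker S p _ (f.mapMat.compLeft (Fin n)), hmap,
    LinearMap.ker_restrictScalars]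

theorem smul_const_mem_localized'_realisableMatSub {a' : Fin d → Fin d → S}
    (ha' : AdmissibleMat (fun i s t => algebraMap R S (c i s t)) a') (x' : N) :
    (fun s t => a' s t • x') ∈ (realisableMatSub c M).localized' S p f.mapMat := by
  obtain ⟨a, ha, σ, rfl⟩ : a' ∈ (admissibleMatSub c R).localized' S p
      (Algebra.linearMap R S).mapMat := by
    rwa [localized'_admissibleMatSub]
  obtain ⟨⟨x, τ⟩, hx'⟩ := IsLocalizedModule.mk'_surjective p f x'
  have hσ (s t : Fin d) :
      (σ : R) • IsLocalizedModule.mk' (Algebra.linearMap R S).mapMat a σ s t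
        = algebraMap R S (a s t) := by
    simpa [Submonoid.smul_def] using
      congrFun (congrFun (IsLocalizedModule.mk'_cancel' (Algebra.linearMap R S).mapMat a σ) s) t
  have hτ : (τ : R) • x' = f x := hx' ▸ IsLocalizedModule.mk'_cancel' f x τ
  have hcleared : ((σ * τ : p) : R) • (fun s t => IsLocalizedModule.mk'
      (Algebra.linearMap R S).mapMat a σ s t • x') = f.mapMat (fun s t => a s t • x) := by
    rw [LinearMap.mapMat_smul_const (S := S)]
    ext s t
    rw [Pi.smul_apply, Pi.smul_apply, Submonoid.coe_mul, mul_smul, smul_comm (τ : R),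
      ← smul_assoc, hσ, hτ]
  rw [← Submodule.smul_mem_iff_of_isUnit _ (IsLocalization.map_units S (σ * τ)),
    algebraMap_smul, hcleared]
  exact ⟨_, Submodule.subset_span ⟨a, x, ha, rfl⟩, 1, IsLocalizedModule.mk'_one p _ _⟩

theorem localized'_realisableMatSub :
    (realisableMatSub c M).localized' S p f.mapMat
      = realisableMatSub (fun i s t => algebraMap R S (c i s t)) N := by
  apply le_antisymm
  · rw [(Submodule.localized'gi S p f.mapMat).gc.le_iff_le, realisableMatSub, Submodule.span_le]
    rintro _ ⟨a, x, ha, rfl⟩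
    exact Submodule.subset_span ⟨_, f x,
      mapMat_mem_admissibleMatSub c (Algebra.linearMap R S) ha, f.mapMat_smul_const (S := S) a x⟩
  · rw [realisableMatSub, Submodule.span_le]
    rintro _ ⟨a', x', ha', rfl⟩
    exact smul_const_mem_localized'_realisableMatSub c p f ha' x'

end Localization

/-- The isomorphisms `S⁻¹(Mat_d(M)_ad) ≅ Mat_d(S⁻¹M)_ad` and `S⁻¹(Mat_d(M)_real) ≅
Mat_d(S⁻¹M)_real` are expressed by saying that the restrictions of `matMk` are localisation
maps. -/
theorem localization_matrixRealisable_general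
    {A : Type*} [CommRing A]
    {n d : ℕ}
    (c : Fin n → Fin d → Fin d → A)
    (S : Submonoid A)
    (M : Type*) [AddCommGroup M] [Module A M] :
    IsLocalizedModule S
        ((matMk S M (d := d)).restrict (fun x hx => matMk_mem_admissible S M c x hx)) ∧
    IsLocalizedModule S
        ((matMk S M (d := d)).restrict (fun x hx => matMk_mem_realisable S M c x hx)) ∧
    (MatrixRealisable c M →
      MatrixRealisable (fun i s t => algebraMap A (Localization S) (c i s t))
        (LocalizedModule S M)) := by
  have hadm := localized'_admissibleMatSub (S := Localization S) c S
    (LocalizedModule.mkLinearMap S M)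
  have hreal := localized'_realisableMatSub (S := Localization S) c S
    (LocalizedModule.mkLinearMap S M)
  refine ⟨IsLocalizedModule.restrict_of_localized'_eq S _ hadm _,
    IsLocalizedModule.restrict_of_localized'_eq S _ hreal _, fun hM => ?_⟩
  rw [matrixRealisable_iff_le, ← hadm, ← hreal]
  exact (Submodule.localized'gi _ S _).gc.monotone_l hM

/-- **Lemma 2.7 (matrix version).** Let `A` be a Dedekind domain or a field, with structure
constants `c` coming from a basis of an `A`-algebra `Λ` and a basis of a `Λ`-module `P`, and
let `S` be a multiplicatively closed subset of `A`.  For an `A`-module `M`, the inclusions of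
`Mat_d(M)_ad` and `Mat_d(M)_real` into `Mat_d(M)` induce isomorphisms
`S⁻¹(Mat_d(M)_ad) ≅ Mat_d(S⁻¹M)_ad` and `S⁻¹(Mat_d(M)_real) ≅ Mat_d(S⁻¹M)_real`
(formalised: the restrictions of the natural map `Mat_d(M) → Mat_d(S⁻¹M)` to these submodules
are localisation maps); in particular, if `M` is a matrix-realisable `A`-module, then `S⁻¹M`
is a matrix-realisable `S⁻¹A`-module. -/
theorem localization_matrixRealisable
    {A : Type*} [CommRing A] [IsDomain A]
    (hA : IsDedekindDomain A ∨ IsField A)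
    {n d : ℕ}
    (Λ : Type*) [Ring Λ] [Algebra A Λ]
    (P : Type*) [AddCommGroup P] [Module A P] [Module Λ P] [IsScalarTower A Λ P]
    (bΛ : Module.Basis (Fin n) A Λ) (bP : Module.Basis (Fin d) A P)
    (c : Fin n → Fin d → Fin d → A)
    (hc : ∀ (i : Fin n) (s : Fin d), bΛ i • bP s = ∑ t, c i s t • bP t)
    (S : Submonoid A)
    (M : Type*) [AddCommGroup M] [Module A M] :
    IsLocalizedModule S
        ((matMk S M (d := d)).restrict (fun x hx => matMk_mem_admissible S M c x hx)) ∧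
    IsLocalizedModule S
        ((matMk S M (d := d)).restrict (fun x hx => matMk_mem_realisable S M c x hx)) ∧
    (MatrixRealisable c M →
      MatrixRealisable (fun i s t => algebraMap A (Localization S) (c i s t))
        (LocalizedModule S M)) :=
  localization_matrixRealisable_general c S M
end

section
/- Let M be an A-module. Then M is a matrix-realisable A-module if and only if the localisation M_𝔪 is a matrix-realisable A_𝔪-module for every maximal ideal 𝔪 of A. -/
section LocGlobalAux

variable {A : Type*} [CommRing A] {n d : ℕ} (c : Fin n → Fin d → Fin d → A)
variable {S : Submonoid A}
variable {M : Type*} [AddCommGroup M] [Module A M]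

private lemma mk_add_same (x y : M) (u : S) :
    LocalizedModule.mk (x + y) u = LocalizedModule.mk x u + LocalizedModule.mk y u := by
  rw [LocalizedModule.mk_add_mk, ← smul_add, LocalizedModule.mk_cancel_common_left]

private lemma mk_sum' {ι : Type*} (F : Finset ι) (f : ι → M) (u : S) :
    LocalizedModule.mk (∑ i ∈ F, f i) u = ∑ i ∈ F, LocalizedModule.mk (f i) u := by
  classical
  induction F using Finset.cons_induction with
  | empty => simp
  | cons a F ha ih => rw [Finset.sum_cons, Finset.sum_cons, mk_add_same, ih]

private lemma sum_alg_smul_mk (f : Fin d → A) (g : Fin d → M) (u : S) :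
    ∑ t, algebraMap A (Localization S) (f t) • LocalizedModule.mk (g t) u
      = LocalizedModule.mk (∑ t, f t • g t) u := by
  rw [mk_sum']
  refine Finset.sum_congr rfl fun t _ => ?_
  rw [algebraMap_smul, LocalizedModule.smul'_mk]

/-- Every admissible matrix over the localized module is, up to a single denominator,
the image of an admissible matrix over `M`. -/
private lemma admissible_lift (m : Fin d → Fin d → LocalizedModule S M)
    (hm : AdmissibleMat (fun i s t => algebraMap A (Localization S) (c i s t)) m) :
    ∃ (u : S) (m₀ : Fin d → Fin d → M), AdmissibleMat c m₀ ∧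
      ∀ s t, m s t = LocalizedModule.mk (m₀ s t) u := by
  classical
  have hsur : ∀ z : LocalizedModule S M, ∃ x : M, ∃ w : S, z = LocalizedModule.mk x w :=
    fun z => LocalizedModule.induction_on (fun x w => ⟨x, w, rfl⟩) z
  choose x w hxw using fun p : Fin d × Fin d => hsur (m p.1 p.2)
  set u₁ : S := ∏ p : Fin d × Fin d, w p with hu₁
  set m₁ : Fin d → Fin d → M :=
    fun s t => (∏ p ∈ Finset.univ.erase (s, t), w p) • x (s, t) with hm₁
  have he₁ : ∀ s t, m s t = LocalizedModule.mk (m₁ s t) u₁ := by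
    intro s t
    rw [hxw (s, t), show u₁ = (∏ p ∈ Finset.univ.erase (s, t), w p) * w (s, t) from
      (Finset.prod_erase_mul _ _ (Finset.mem_univ _)).symm]
    exact (LocalizedModule.mk_cancel_common_left _ _ _).symm
  set L : Fin n × Fin d × Fin d → M := fun q => ∑ t, c q.1 q.2.1 t • m₁ q.2.2 t with hL
  set R : Fin n × Fin d × Fin d → M := fun q => ∑ t, c q.1 t q.2.2 • m₁ t q.2.1 with hR
  have hLR : ∀ q, LocalizedModule.mk (L q) u₁ = LocalizedModule.mk (R q) u₁ := by
    intro q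
    have h0 := hm q.1 q.2.1 q.2.2
    simp only [he₁] at h0
    rwa [sum_alg_smul_mk, sum_alg_smul_mk] at h0
  have hv : ∀ q, ∃ v : S, ((v : A) * (u₁ : A)) • L q = ((v : A) * (u₁ : A)) • R q := by
    intro q
    obtain ⟨v, hv⟩ := LocalizedModule.mk_eq.mp (hLR q)
    exact ⟨v, by simpa [Submonoid.smul_def, mul_smul] using hv⟩
  choose v hv using hv
  set V : S := (∏ q, v q) * u₁ with hV
  have hVq : ∀ q, (V : A) • L q = (V : A) • R q := by
    intro q
    have h1 : (V : A) = (∏ p ∈ Finset.univ.erase q, (v p : A)) * ((v q : A) * (u₁ : A)) := by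
      rw [hV]
      push_cast [Submonoid.coe_finset_prod]
      rw [← Finset.prod_erase_mul _ _ (Finset.mem_univ q), mul_assoc]
    conv_lhs => rw [h1, mul_smul, hv q]
    rw [h1]; simp [mul_smul]
  refine ⟨V * u₁, fun s t => (V : A) • m₁ s t, ?_, ?_⟩
  · intro i s t'
    have e1 : ∑ t, c i s t • ((V : A) • m₁ t' t) = (V : A) • L (i, s, t') := by
      rw [hL, Finset.smul_sum]
      exact Finset.sum_congr rfl fun t _ => smul_comm _ _ _
    have e2 : ∑ t, c i t t' • ((V : A) • m₁ t s) = (V : A) • R (i, s, t') := by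
      rw [hR, Finset.smul_sum]
      exact Finset.sum_congr rfl fun t _ => smul_comm _ _ _
    rw [e1, e2, hVq]
  · intro s t
    rw [he₁ s t, ← LocalizedModule.mk_cancel_common_left V u₁, Submonoid.smul_def]

private lemma lmk_cancel (a : S) (r : A) (w : S) :
    Localization.mk ((a : A) * r) (a * w) = Localization.mk r w := by
  rw [Localization.mk_eq_mk_iff, Localization.r_iff_exists]
  exact ⟨1, by push_cast; ring⟩

private lemma alg_mul_mk (b r : A) (w : S) :
    algebraMap A (Localization S) b • Localization.mk r w = Localization.mk (b * r) w := by
  rw [smul_eq_mul, ← Localization.mk_one_eq_algebraMap, Localization.mk_mul, one_mul]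

/-- Every admissible matrix of scalars over the localization is, up to a single
denominator, the image of an admissible matrix of scalars over `A`. -/
private lemma admissibleScalar_lift (a' : Fin d → Fin d → Localization S)
    (h : AdmissibleMat (fun i s t => algebraMap A (Localization S) (c i s t)) a') :
    ∃ (w : S) (a₀ : Fin d → Fin d → A), AdmissibleMat c a₀ ∧
      ∀ s t, a' s t = Localization.mk (a₀ s t) w := by
  classical
  have hsur : ∀ z : Localization S, ∃ r : A, ∃ w : S, z = Localization.mk r w :=
    fun z => Localization.induction_on z fun y => ⟨y.1, y.2, rfl⟩
  choose r w hrw using fun p : Fin d × Fin d => hsur (a' p.1 p.2)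
  set w₁ : S := ∏ p : Fin d × Fin d, w p with hw₁
  set a₁ : Fin d → Fin d → A :=
    fun s t => ((∏ p ∈ Finset.univ.erase (s, t), w p : S) : A) * r (s, t) with ha₁
  have he₁ : ∀ s t, a' s t = Localization.mk (a₁ s t) w₁ := by
    intro s t
    rw [hrw (s, t), show w₁ = (∏ p ∈ Finset.univ.erase (s, t), w p) * w (s, t) from
      (Finset.prod_erase_mul _ _ (Finset.mem_univ _)).symm]
    exact (lmk_cancel _ _ _).symm
  set L : Fin n × Fin d × Fin d → A := fun q => ∑ t, c q.1 q.2.1 t * a₁ q.2.2 t with hL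
  set R : Fin n × Fin d × Fin d → A := fun q => ∑ t, c q.1 t q.2.2 * a₁ t q.2.1 with hR
  have hLR : ∀ q, Localization.mk (L q) w₁ = Localization.mk (R q) w₁ := by
    intro q
    have h0 := h q.1 q.2.1 q.2.2
    simp only [he₁, alg_mul_mk] at h0
    rwa [← Localization.mk_sum, ← Localization.mk_sum] at h0
  have hv : ∀ q, ∃ v : S, ((v : A) * (w₁ : A)) * L q = ((v : A) * (w₁ : A)) * R q := by
    intro q
    obtain ⟨v, hv⟩ := Localization.r_iff_exists.mp (Localization.mk_eq_mk_iff.mp (hLR q))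
    exact ⟨v, by rw [mul_assoc, mul_assoc]; exact hv⟩
  choose v hv using hv
  set V : S := (∏ q, v q) * w₁ with hV
  have hVq : ∀ q, (V : A) * L q = (V : A) * R q := by
    intro q
    have h1 : (V : A) = (∏ p ∈ Finset.univ.erase q, (v p : A)) * ((v q : A) * (w₁ : A)) := by
      rw [hV]
      push_cast [Submonoid.coe_finset_prod]
      rw [← Finset.prod_erase_mul _ _ (Finset.mem_univ q), mul_assoc]
    conv_lhs => rw [h1, mul_assoc, hv q]
    rw [h1]; ring
  refine ⟨V * w₁, fun s t => (V : A) * a₁ s t, ?_, ?_⟩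
  · intro i s t'
    have e1 : ∑ t, c i s t • ((V : A) * a₁ t' t) = (V : A) * L (i, s, t') := by
      rw [hL, Finset.mul_sum]
      exact Finset.sum_congr rfl fun t _ => by rw [smul_eq_mul]; ring
    have e2 : ∑ t, c i t t' • ((V : A) * a₁ t s) = (V : A) * R (i, s, t') := by
      rw [hR, Finset.mul_sum]
      exact Finset.sum_congr rfl fun t _ => by rw [smul_eq_mul]; ring
    rw [e1, e2, hVq]
  · intro s t
    rw [he₁ s t, ← lmk_cancel V (a₁ s t) w₁]

private lemma mk_map_admissible (m : Fin d → Fin d → M) (hm : AdmissibleMat c m) :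
    AdmissibleMat (fun i s t => algebraMap A (Localization S) (c i s t))
      (fun s t => LocalizedModule.mk (m s t) (1 : S)) := by
  intro i s u
  rw [sum_alg_smul_mk, sum_alg_smul_mk, hm i s u]

/-- The image of a realisable matrix over `M` is realisable over the localization. -/
private lemma realisable_map (m₀ : Fin d → Fin d → M) (h : m₀ ∈ realisableMatSub c M) :
    (fun s t => LocalizedModule.mk (m₀ s t) (1 : S)) ∈
      realisableMatSub (fun i s t => algebraMap A (Localization S) (c i s t))
        (LocalizedModule S M) := by
  refine Submodule.span_induction
    (p := fun z _ => (fun s t => LocalizedModule.mk (z s t) (1 : S)) ∈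
      realisableMatSub (fun i s t => algebraMap A (Localization S) (c i s t))
        (LocalizedModule S M)) ?_ ?_ ?_ ?_ h
  · rintro z ⟨a, y, ha, rfl⟩
    refine Submodule.subset_span ⟨fun s t => algebraMap A (Localization S) (a s t),
      LocalizedModule.mk y 1, ?_, ?_⟩
    · intro i s u
      simp only [smul_eq_mul, ← map_mul, ← map_sum]
      exact congrArg _ (ha i s u)
    · funext s t
      rw [algebraMap_smul, LocalizedModule.smul'_mk]
  · simp only [Pi.zero_apply, LocalizedModule.zero_mk]
    exact Submodule.zero_mem _
  · intro z₁ z₂ _ _ h1 h2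
    have : (fun s t => LocalizedModule.mk ((z₁ + z₂) s t) (1 : S)) =
        (fun s t => LocalizedModule.mk (z₁ s t) (1 : S)) +
        (fun s t => LocalizedModule.mk (z₂ s t) (1 : S)) := by
      funext s t
      simp only [Pi.add_apply, mk_add_same]
    rw [this]
    exact Submodule.add_mem _ h1 h2
  · intro a z _ h1
    have : (fun s t => LocalizedModule.mk ((a • z) s t) (1 : S)) =
        algebraMap A (Localization S) a • fun s t => LocalizedModule.mk (z s t) (1 : S) := by
      funext s t
      simp only [Pi.smul_apply, algebraMap_smul, LocalizedModule.smul'_mk]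
    rw [this]
    exact Submodule.smul_mem _ _ h1

/-- Every realisable matrix over the localized module is, up to a single denominator,
the image of a realisable matrix over `M`. -/
private lemma realisable_lift (m' : Fin d → Fin d → LocalizedModule S M)
    (h : m' ∈ realisableMatSub (fun i s t => algebraMap A (Localization S) (c i s t))
      (LocalizedModule S M)) :
    ∃ (u : S) (nn : Fin d → Fin d → M), nn ∈ realisableMatSub c M ∧
      ∀ s t, m' s t = LocalizedModule.mk (nn s t) u := by
  refine Submodule.span_induction
    (p := fun z _ => ∃ (u : S) (nn : Fin d → Fin d → M), nn ∈ realisableMatSub c M ∧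
      ∀ s t, z s t = LocalizedModule.mk (nn s t) u) ?_ ?_ ?_ ?_ h
  · rintro z ⟨a', x', ha', rfl⟩
    obtain ⟨w, a₀, ha₀, he⟩ := admissibleScalar_lift c a' ha'
    obtain ⟨x₀, ux, hx⟩ : ∃ x₀ : M, ∃ ux : S, x' = LocalizedModule.mk x₀ ux :=
      LocalizedModule.induction_on (fun x u => ⟨x, u, rfl⟩) x'
    refine ⟨w * ux, fun s t => a₀ s t • x₀,
      Submodule.subset_span ⟨a₀, x₀, ha₀, rfl⟩, fun s t => ?_⟩
    show a' s t • x' = LocalizedModule.mk (a₀ s t • x₀) (w * ux)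
    rw [he s t, hx, LocalizedModule.mk_smul_mk]
  · exact ⟨1, 0, Submodule.zero_mem _, fun s t => by simp⟩
  · rintro z₁ z₂ _ _ ⟨u₁, n₁, hn₁, he₁⟩ ⟨u₂, n₂, hn₂, he₂⟩
    refine ⟨u₁ * u₂, (u₂ : A) • n₁ + (u₁ : A) • n₂,
      Submodule.add_mem _ (Submodule.smul_mem _ _ hn₁) (Submodule.smul_mem _ _ hn₂),
      fun s t => ?_⟩
    show z₁ s t + z₂ s t = LocalizedModule.mk ((u₂ : A) • n₁ s t + (u₁ : A) • n₂ s t) (u₁ * u₂)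
    rw [he₁, he₂, LocalizedModule.mk_add_mk]
    simp [Submonoid.smul_def]
  · rintro a z _ ⟨u, nn, hn, he⟩
    obtain ⟨⟨b, w⟩, rfl⟩ : ∃ y : A × S, Localization.mk y.1 y.2 = a :=
      Localization.induction_on a fun y => ⟨y, rfl⟩
    refine ⟨w * u, fun s t => b • nn s t, ?_, fun s t => ?_⟩
    · have : (fun s t => b • nn s t) = b • nn := rfl
      rw [this]
      exact Submodule.smul_mem _ _ hn
    · show Localization.mk b w • z s t = LocalizedModule.mk (b • nn s t) (w * u)
      rw [he, LocalizedModule.mk_smul_mk]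

end LocGlobalAux

/-- **Proposition 2.8 (matrix version).** Let `A` be a Dedekind domain or a field, with
structure constants `c` coming from a basis `λ₁,…,λₙ` of an `A`-algebra `Λ` and a basis
`p₁,…,p_d` of a `Λ`-module `P`.  An `A`-module `M` is matrix-realisable if and only if, for
every maximal ideal `𝔪` of `A`, the localisation `M_𝔪` is a matrix-realisable `A_𝔪`-module
(with respect to the localised bases and structure constants `c/1`). -/
theorem matrixRealisable_iff_forall_localization
    {A : Type*} [CommRing A] [IsDomain A]
    (hA : IsDedekindDomain A ∨ IsField A)
    {n d : ℕ}
    (Λ : Type*) [Ring Λ] [Algebra A Λ]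
    (P : Type*) [AddCommGroup P] [Module A P] [Module Λ P] [IsScalarTower A Λ P]
    (bΛ : Module.Basis (Fin n) A Λ) (bP : Module.Basis (Fin d) A P)
    (c : Fin n → Fin d → Fin d → A)
    (hc : ∀ (i : Fin n) (s : Fin d), bΛ i • bP s = ∑ t, c i s t • bP t)
    (M : Type*) [AddCommGroup M] [Module A M] :
    MatrixRealisable c M ↔
      ∀ (𝔪 : Ideal A) (_ : 𝔪.IsMaximal),
        haveI : 𝔪.IsPrime := inferInstance
        MatrixRealisable
          (fun i s t => algebraMap A (Localization.AtPrime 𝔪) (c i s t))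
          (LocalizedModule 𝔪.primeCompl M) := by
  constructor
  · intro hM 𝔪 h𝔪
    haveI : 𝔪.IsPrime := inferInstance
    intro m hm
    obtain ⟨u, m₀, hadm, he⟩ := admissible_lift c m hm
    have h₀ := realisable_map (S := 𝔪.primeCompl) c m₀ (hM m₀ hadm)
    have hme : m = Localization.mk 1 u •
        fun s t => LocalizedModule.mk (m₀ s t) (1 : 𝔪.primeCompl) := by
      funext s t
      rw [Pi.smul_apply, Pi.smul_apply, LocalizedModule.mk_smul_mk, one_smul, mul_one, he]
    show m ∈ realisableMatSub _ _
    rw [hme]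
    exact Submodule.smul_mem _ _ h₀
  · intro h m hm
    by_contra hmem
    classical
    set N := realisableMatSub c M with hN
    set I : Ideal A := N.comap (LinearMap.toSpanSingleton A _ m) with hI
    have hItop : I ≠ ⊤ := by
      intro htop
      refine hmem ?_
      have h1 : (1 : A) ∈ I := htop ▸ Submodule.mem_top
      have : (1 : A) • m ∈ N := h1
      rwa [one_smul] at this
    obtain ⟨𝔪, h𝔪, hle⟩ := Ideal.exists_le_maximal I hItop
    haveI : 𝔪.IsPrime := h𝔪.isPrime
    have hadm' : AdmissibleMat
        (fun i s t => algebraMap A (Localization.AtPrime 𝔪) (c i s t))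
        (fun s t => LocalizedModule.mk (m s t) (1 : 𝔪.primeCompl)) :=
      mk_map_admissible c m hm
    have hreal := h 𝔪 h𝔪 _ hadm'
    obtain ⟨u, nn, hn, he⟩ := realisable_lift c _ hreal
    have hv : ∀ p : Fin d × Fin d, ∃ v : 𝔪.primeCompl,
        ((v : A) * (u : A)) • m p.1 p.2 = (v : A) • nn p.1 p.2 := by
      intro p
      obtain ⟨v, hv⟩ := LocalizedModule.mk_eq.mp (he p.1 p.2)
      exact ⟨v, by simpa [Submonoid.smul_def, mul_smul] using hv⟩
    choose v hv using hv
    set V : 𝔪.primeCompl := ∏ p, v p with hV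
    have key : (((V * u : 𝔪.primeCompl) : A)) • m = (V : A) • nn := by
      funext s t
      have hcoe : (V : A) = ∏ p : Fin d × Fin d, (v p : A) := by
        rw [hV]; exact Submonoid.coe_finset_prod _ _ _
      have h1 : ((V * u : 𝔪.primeCompl) : A) =
          (∏ p ∈ Finset.univ.erase (s, t), (v p : A)) * ((v (s, t) : A) * (u : A)) := by
        rw [Submonoid.coe_mul, hcoe,
          ← Finset.prod_erase_mul _ _ (Finset.mem_univ (s, t)), mul_assoc]
      have h2 : (V : A) =
          (∏ p ∈ Finset.univ.erase (s, t), (v p : A)) * (v (s, t) : A) := by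
        rw [hcoe, ← Finset.prod_erase_mul _ _ (Finset.mem_univ (s, t))]
      have hvst : ((v (s, t) : A) * (u : A)) • m s t = (v (s, t) : A) • nn s t := hv (s, t)
      rw [Pi.smul_apply, Pi.smul_apply, h1, h2, mul_smul, mul_smul,
        ← mul_smul ((v (s, t) : A)) ((u : A)) (m s t), hvst, Pi.smul_apply, Pi.smul_apply, mul_smul]
    have hmemI : ((V * u : 𝔪.primeCompl) : A) ∈ I := by
      show ((V * u : 𝔪.primeCompl) : A) • m ∈ N
      rw [key]
      exact Submodule.smul_mem _ _ hn
    exact (V * u).2 (hle hmemI)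
end

section
/- Let G be a finite group and X a finite G-set. If for each prime p the permutation module 𝔽_p X over the group algebra 𝔽_p G has the double centraliser property, then the permutation module ℤX over the integral group algebra ℤG has the double centraliser property. -/
/-- The double centraliser property: every additive endomorphism of `P` commuting with all
`R`-linear endomorphisms of `P` is given by the action of an element of `R` (i.e. the natural
map `R → DEnd_R(P)` is surjective). -/
def HasDCP (R : Type*) [Ring R] (P : Type*) [AddCommGroup P] [Module R P] : Prop :=
  ∀ σ : P →+ P, (∀ (α : P →ₗ[R] P) (p : P), σ (α p) = α (σ p)) → ∃ r : R, ∀ p : P, σ p = r • p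

section Perm

variable (S : Type*) [CommRing S] (G : Type*) [Group G] (X : Type*) [MulAction G X]

/-- The action of `G` on the free module `X →₀ S` permuting the basis `X`,
as a monoid homomorphism into the endomorphism monoid. -/
noncomputable def permRep : G →* Module.End S (X →₀ S) where
  toFun g := Finsupp.lmapDomain S S (fun x => g • x)
  map_one' := by
    show Finsupp.lmapDomain S S (fun x : X => (1 : G) • x) = 1
    have : (fun x : X => (1 : G) • x) = id := funext fun x => one_smul G x
    rw [this, Finsupp.lmapDomain_id]; rfl
  map_mul' g h := by
    show Finsupp.lmapDomain S S (fun x : X => (g * h) • x)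
      = Finsupp.lmapDomain S S (fun x : X => g • x) * Finsupp.lmapDomain S S (fun x : X => h • x)
    have : (fun x : X => (g * h) • x) = (fun x => g • x) ∘ (fun x => h • x) :=
      funext fun x => mul_smul g h x
    rw [this, Finsupp.lmapDomain_comp]; rfl

/-- The algebra homomorphism `S[G] → End_S(SX)` defining the permutation module. -/
noncomputable def permAlgHom : MonoidAlgebra S G →ₐ[S] Module.End S (X →₀ S) :=
  MonoidAlgebra.lift S _ G (permRep S G X)

/-- The permutation module structure on the free `S`-module `X →₀ S` over the
group algebra `MonoidAlgebra S G`. -/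
noncomputable instance permModule : Module (MonoidAlgebra S G) (X →₀ S) :=
  Module.compHom _ (permAlgHom S G X).toRingHom

lemma permModule_smul_def (r : MonoidAlgebra S G) (f : X →₀ S) :
    r • f = permAlgHom S G X r f := rfl

instance : IsScalarTower S (MonoidAlgebra S G) (X →₀ S) :=
  ⟨fun s r f => by
    rw [permModule_smul_def, permModule_smul_def, map_smul, LinearMap.smul_apply]⟩


end Perm

/-!
Let `D ⊆ End_ℤ(ℤX)` be the double centraliser of `ℤX` and `A ⊆ D` the image of `ℤG`.
Every `𝔽_p G`-endomorphism of `𝔽_p X` lifts to a `ℤG`-endomorphism of `ℤX`: lift the images of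
the basis vectors coefficientwise, which commutes with permuting `X`. Hence an element of `D`
reduces mod `p` to an element of the double centraliser of `𝔽_p X`, i.e. to the action of some
`r̄ ∈ 𝔽_p G`. Lifting `r̄` to `r ∈ ℤG`, the difference with `r` vanishes mod `p`, and since `ℤX`
is torsion-free it is `p` times an element of `D`: so `D = A + pD` for every prime `p`. The
finitely generated abelian group `D / A` is therefore `p`-divisible for all `p`, and vanishes
by Nakayama's lemma.
-/

open scoped Pointwise

theorem Submodule.eq_bot_of_forall_prime_le_smul {M : Type*} [AddCommGroup M]
    (N : Submodule ℤ M) (hN : N.FG) (h : ∀ p : ℕ, p.Prime → N ≤ (p : ℤ) • N) : N = ⊥ := by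
  rw [← Submodule.annihilator_eq_top_iff, ← Ideal.absNorm_eq_one_iff]
  by_contra hne
  obtain ⟨p, hp, hdvd⟩ := Nat.exists_prime_and_dvd hne
  obtain ⟨r, hr1, hr⟩ := Submodule.exists_sub_one_mem_and_smul_eq_zero_of_fg_of_le_smul
    (Ideal.span {(p : ℤ)}) N hN (by rw [Submodule.ideal_span_singleton_smul]; exact h p hp)
  have hann : N.annihilator ≤ Ideal.span {(p : ℤ)} := by
    rw [← Int.ideal_span_absNorm_eq_self N.annihilator, Ideal.span_singleton_le_span_singleton]
    exact_mod_cast hdvd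
  have hr' : r ∈ Ideal.span {(p : ℤ)} := hann (Submodule.mem_annihilator.mpr hr)
  have h1 : (1 : ℤ) ∈ Ideal.span {(p : ℤ)} := by
    simpa using (Ideal.span {(p : ℤ)}).sub_mem hr' hr1
  rw [Ideal.mem_span_singleton] at h1
  exact hp.one_lt.ne' (by exact_mod_cast Int.eq_one_of_dvd_one (by positivity) h1)

theorem Submodule.le_of_forall_prime_le_sup_smul {M : Type*} [AddCommGroup M]
    (A D : Submodule ℤ M) (hD : D.FG) (h : ∀ p : ℕ, p.Prime → D ≤ A ⊔ (p : ℤ) • D) : D ≤ A := by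
  have hbot : D.map A.mkQ = ⊥ := by
    refine Submodule.eq_bot_of_forall_prime_le_smul _ (hD.map _) fun p hp => ?_
    calc D.map A.mkQ ≤ (A ⊔ (p : ℤ) • D).map A.mkQ := Submodule.map_mono (h p hp)
      _ = (p : ℤ) • D.map A.mkQ := by
        rw [Submodule.map_sup, Submodule.mkQ_map_self, bot_sup_eq, Submodule.map_pointwise_smul]
  rwa [← LinearMap.le_ker_iff_map, Submodule.ker_mkQ] at hbot

section DoubleCentralizer

variable (R P : Type*) [Ring R] [AddCommGroup P] [Module R P]

/-- `DEnd_R(P)`, realised inside `End_ℤ(P)`; `actionRange R P` below is the image of `ν`. -/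
def doubleCentralizer : Submodule ℤ (Module.End ℤ P) where
  carrier := {δ | ∀ (α : P →ₗ[R] P) (x : P), δ (α x) = α (δ x)}
  add_mem' {δ₁ δ₂} h₁ h₂ α x := by simp [h₁ α x, h₂ α x]
  zero_mem' α x := by simp
  smul_mem' c δ h α x := by simp [h α x]

def actionRange : Submodule ℤ (Module.End ℤ P) :=
  LinearMap.range (Module.toModuleEnd ℤ (S := R) P).toAddMonoidHom.toIntLinearMap

variable {R P}

theorem mem_actionRange {δ : Module.End ℤ P} :
    δ ∈ actionRange R P ↔ ∃ r : R, ∀ x, δ x = r • x := by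
  rw [actionRange, LinearMap.mem_range]
  exact exists_congr fun r => LinearMap.ext_iff.trans (forall_congr' fun x => eq_comm)

theorem actionRange_le_doubleCentralizer : actionRange R P ≤ doubleCentralizer R P := by
  intro δ hδ α x
  obtain ⟨r, hr⟩ := mem_actionRange.mp hδ
  rw [hr, hr, map_smul]

theorem hasDCP_of_doubleCentralizer_le (h : doubleCentralizer R P ≤ actionRange R P) :
    HasDCP R P := fun σ hσ => mem_actionRange.mp (h (show σ.toIntLinearMap ∈ _ from hσ))

theorem mem_doubleCentralizer_of_smul_mem [IsAddTorsionFree P] {n : ℤ} (hn : n ≠ 0)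
    {τ : Module.End ℤ P} (h : n • τ ∈ doubleCentralizer R P) : τ ∈ doubleCentralizer R P :=
  fun α x => smul_right_injective P hn <| by
    simpa [LinearMap.map_smul_of_tower] using h α x

theorem Module.End.exists_eq_smul_of_forall_exists_eq_smul {M : Type*} [AddCommGroup M]
    [IsAddTorsionFree M] (φ : Module.End ℤ M) {n : ℤ} (hn : n ≠ 0)
    (h : ∀ x, ∃ y, φ x = n • y) : ∃ τ : Module.End ℤ M, φ = n • τ := by
  choose τ hτ using h
  have hinj := smul_right_injective M hn
  refine ⟨{ toFun := τ, map_add' := fun x y => hinj ?_, map_smul' := fun c x => hinj ?_ }, ?_⟩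
  · simp only [smul_add, ← hτ, map_add]
  · simp only [RingHom.id_apply, smul_comm n c, ← hτ, map_zsmul]
  · ext x; exact hτ x

theorem doubleCentralizer_le_of_forall_prime [Module.Finite ℤ P]
    (h : ∀ p : ℕ, p.Prime →
      doubleCentralizer R P ≤ actionRange R P ⊔ (p : ℤ) • doubleCentralizer R P) :
    doubleCentralizer R P ≤ actionRange R P :=
  Submodule.le_of_forall_prime_le_sup_smul _ _ (IsNoetherian.noetherian _) h

end DoubleCentralizer

section PermutationModule

variable {G : Type*} [Group G] {X : Type*} [MulAction G X]

theorem permModule_single_smul {S : Type*} [CommRing S] (g : G) (c : S) (m : X →₀ S) :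
    MonoidAlgebra.single g c • m = c • Finsupp.mapDomain (g • ·) m := by
  rw [permModule_smul_def, permAlgHom, MonoidAlgebra.lift_single]
  rfl

variable {n : ℕ}

variable (n) in
noncomputable def reduceMod : (X →₀ ℤ) →+ (X →₀ ZMod n) :=
  Finsupp.mapRange.addMonoidHom (Int.castAddHom (ZMod n))

variable (n) in
/-- A set-theoretic section of `reduceMod n`; it is not additive. -/
noncomputable def liftMod (w : X →₀ ZMod n) : X →₀ ℤ :=
  Finsupp.mapRange ZMod.cast ZMod.cast_zero w

@[simp]
theorem reduceMod_apply (m : X →₀ ℤ) (x : X) : reduceMod n m x = m x := rfl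

@[simp]
theorem reduceMod_liftMod (w : X →₀ ZMod n) : reduceMod n (liftMod n w) = w := by
  ext x
  simp [liftMod]

@[simp]
theorem reduceMod_single (x : X) (c : ℤ) :
    reduceMod n (Finsupp.single x c) = Finsupp.single x (c : ZMod n) :=
  Finsupp.mapRange_single (hf := map_zero _)

theorem reduceMod_zsmul (c : ℤ) (m : X →₀ ℤ) :
    reduceMod n (c • m) = (c : ZMod n) • reduceMod n m := by
  ext x
  simp

theorem reduceMod_mapDomain (f : X → X) (m : X →₀ ℤ) :
    reduceMod n (Finsupp.mapDomain f m) = Finsupp.mapDomain f (reduceMod n m) :=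
  (Finsupp.mapDomain_mapRange f m _ (map_zero _) (map_add _)).symm

theorem liftMod_mapDomain {f : X → X} (hf : Function.Injective f) (w : X →₀ ZMod n) :
    liftMod n (Finsupp.mapDomain f w) = Finsupp.mapDomain f (liftMod n w) := by
  simpa [liftMod, Finsupp.embDomain_eq_mapDomain] using
    (Finsupp.embDomain_mapRange ⟨f, hf⟩ (ZMod.cast : ZMod n → ℤ) w ZMod.cast_zero).symm

theorem reduceMod_smul (r : MonoidAlgebra ℤ G) (m : X →₀ ℤ) :
    reduceMod n (r • m) = MonoidAlgebra.map (Int.castAddHom (ZMod n)) r • reduceMod n m := by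
  induction r using MonoidAlgebra.induction_linear with
  | zero => simp
  | add r s hr hs => simp only [add_smul, map_add, MonoidAlgebra.map_add, hr, hs]
  | single g c =>
    rw [permModule_single_smul, reduceMod_zsmul, reduceMod_mapDomain]
    simp [permModule_single_smul]

theorem exists_eq_smul_of_reduceMod_eq_zero {m : X →₀ ℤ} (h : reduceMod n m = 0) :
    ∃ m', m = (n : ℤ) • m' := by
  refine ⟨Finsupp.mapRange (· / (n : ℤ)) (Int.zero_ediv _) m, Finsupp.ext fun x => ?_⟩
  have hdvd : (n : ℤ) ∣ m x :=
    (ZMod.intCast_zmod_eq_zero_iff_dvd _ _).mp (by simpa using congr($h x))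
  simp [Int.mul_ediv_cancel' hdvd]

variable (n) in
noncomputable def reduceEnd (δ : Module.End ℤ (X →₀ ℤ)) : Module.End (ZMod n) (X →₀ ZMod n) :=
  Finsupp.linearCombination (ZMod n) fun x => reduceMod n (δ (Finsupp.single x 1))

theorem reduceEnd_apply_reduceMod (δ : Module.End ℤ (X →₀ ℤ)) (m : X →₀ ℤ) :
    reduceEnd n δ (reduceMod n m) = reduceMod n (δ m) := by
  induction m using Finsupp.induction_linear with
  | zero => simp
  | add m m' hm hm' => simp only [map_add, hm, hm']
  | single x c =>
    rw [← Finsupp.smul_single_one, map_zsmul δ, reduceMod_zsmul, reduceMod_zsmul, map_smul]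
    simp [reduceEnd]

theorem exists_lift_linearMap
    (β : (X →₀ ZMod n) →ₗ[MonoidAlgebra (ZMod n) G] (X →₀ ZMod n)) :
    ∃ L : (X →₀ ℤ) →ₗ[MonoidAlgebra ℤ G] (X →₀ ℤ), ∀ m, reduceMod n (L m) = β (reduceMod n m) := by
  let L₀ : (X →₀ ℤ) →ₗ[ℤ] (X →₀ ℤ) :=
    Finsupp.linearCombination ℤ fun x => liftMod n (β (Finsupp.single x 1))
  have hβ (g : G) (w : X →₀ ZMod n) :
      β (Finsupp.mapDomain (g • ·) w) = Finsupp.mapDomain (g • ·) (β w) := by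
    simpa [permModule_single_smul] using β.map_smul (MonoidAlgebra.single g 1) w
  have hL₀ (g : G) (m : X →₀ ℤ) :
      L₀ (MonoidAlgebra.single g (1 : ℤ) • m) = MonoidAlgebra.single g (1 : ℤ) • L₀ m := by
    simp only [permModule_single_smul, one_smul]
    induction m using Finsupp.induction_linear with
    | zero => simp
    | add m m' hm hm' => simp only [Finsupp.mapDomain_add, map_add, hm, hm']
    | single x c =>
      have hx : (Finsupp.single (g • x) 1 : X →₀ ZMod n) =
          Finsupp.mapDomain (g • ·) (Finsupp.single x 1) := Finsupp.mapDomain_single.symm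
      simp only [L₀, Finsupp.mapDomain_single, Finsupp.linearCombination_single]
      rw [hx, hβ, liftMod_mapDomain (MulAction.injective g), Finsupp.mapDomain_smul]
  refine ⟨MonoidAlgebra.equivariantOfLinearOfComm L₀ hL₀, fun m => ?_⟩
  induction m using Finsupp.induction_linear with
  | zero => simp
  | add m m' hm hm' => simp only [map_add, hm, hm']
  | single x c =>
    rw [← Finsupp.smul_single_one, map_zsmul, reduceMod_zsmul, reduceMod_zsmul,
      LinearMap.map_smul_of_tower β]
    simp [L₀]

theorem reduceEnd_commute_of_mem_doubleCentralizer {δ : Module.End ℤ (X →₀ ℤ)}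
    (hδ : δ ∈ doubleCentralizer (MonoidAlgebra ℤ G) (X →₀ ℤ))
    (β : (X →₀ ZMod n) →ₗ[MonoidAlgebra (ZMod n) G] (X →₀ ZMod n)) (w : X →₀ ZMod n) :
    reduceEnd n δ (β w) = β (reduceEnd n δ w) := by
  obtain ⟨L, hL⟩ := exists_lift_linearMap β
  rw [← reduceMod_liftMod w, ← hL, reduceEnd_apply_reduceMod, reduceEnd_apply_reduceMod, hδ, hL]

theorem mem_smul_doubleCentralizer_of_reduceMod_eq_zero [NeZero n] {R : Type*} [Ring R]
    [Module R (X →₀ ℤ)] {φ : Module.End ℤ (X →₀ ℤ)} (hφ : φ ∈ doubleCentralizer R (X →₀ ℤ))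
    (h : ∀ m, reduceMod n (φ m) = 0) : φ ∈ (n : ℤ) • doubleCentralizer R (X →₀ ℤ) := by
  have hn : (n : ℤ) ≠ 0 := Int.natCast_ne_zero.mpr (NeZero.ne n)
  obtain ⟨τ, rfl⟩ := φ.exists_eq_smul_of_forall_exists_eq_smul hn
    fun m => exists_eq_smul_of_reduceMod_eq_zero (h m)
  exact Submodule.smul_mem_pointwise_smul _ _ _ (mem_doubleCentralizer_of_smul_mem hn hφ)

theorem doubleCentralizer_le_sup_smul [NeZero n]
    (h : HasDCP (MonoidAlgebra (ZMod n) G) (X →₀ ZMod n)) :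
    doubleCentralizer (MonoidAlgebra ℤ G) (X →₀ ℤ) ≤
      actionRange (MonoidAlgebra ℤ G) (X →₀ ℤ) ⊔
        (n : ℤ) • doubleCentralizer (MonoidAlgebra ℤ G) (X →₀ ℤ) := by
  intro δ hδ
  obtain ⟨r', hr'⟩ :=
    h (reduceEnd n δ).toAddMonoidHom (reduceEnd_commute_of_mem_doubleCentralizer hδ)
  obtain ⟨r, rfl⟩ :=
    MonoidAlgebra.map_surjective (Int.castAddHom (ZMod n)) ZMod.intCast_surjective r'
  let ρ := Module.toModuleEnd ℤ (X →₀ ℤ) r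
  have hρ : ρ ∈ actionRange (MonoidAlgebra ℤ G) (X →₀ ℤ) := mem_actionRange.mpr ⟨r, fun _ => rfl⟩
  have hδρ : δ - ρ ∈ (n : ℤ) • doubleCentralizer (MonoidAlgebra ℤ G) (X →₀ ℤ) := by
    refine mem_smul_doubleCentralizer_of_reduceMod_eq_zero
      (sub_mem hδ (actionRange_le_doubleCentralizer hρ)) fun m => ?_
    rw [LinearMap.sub_apply, map_sub, ← reduceEnd_apply_reduceMod, sub_eq_zero]
    exact (hr' _).trans (reduceMod_smul r m).symm
  simpa using Submodule.add_mem_sup hρ hδρ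

end PermutationModule

theorem intPermutationModule_hasDCP_of_prime_fields_general
    (G : Type*) [Group G] (X : Type*) [Fintype X] [MulAction G X]
    (h : ∀ p : ℕ, p.Prime →
      HasDCP (MonoidAlgebra (ZMod p) G) (X →₀ ZMod p)) :
    HasDCP (MonoidAlgebra ℤ G) (X →₀ ℤ) :=
  hasDCP_of_doubleCentralizer_le <| doubleCentralizer_le_of_forall_prime fun p hp =>
    have : NeZero p := ⟨hp.ne_zero⟩
    doubleCentralizer_le_sup_smul (h p hp)

/-- **Proposition 3.6 (permutation module case).** Let `G` be a finite group and `X` a finite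
`G`-set.  If for each prime `p` the permutation module `𝔽_p X` over the group algebra `𝔽_p G`
has the double centraliser property, then the permutation module `ℤX` over `ℤG` has the
double centraliser property. -/
theorem intPermutationModule_hasDCP_of_prime_fields
    (G : Type*) [Group G] [Fintype G] (X : Type*) [Fintype X] [MulAction G X]
    (h : ∀ p : ℕ, p.Prime →
      HasDCP (MonoidAlgebra (ZMod p) G) (X →₀ ZMod p)) :
    HasDCP (MonoidAlgebra ℤ G) (X →₀ ℤ) :=
  intPermutationModule_hasDCP_of_prime_fields_general G X h
end

section
/- Let S be a finite-dimensional algebra over a field F, let e be a nonzero idempotent of S, and let T be a finite-dimensional S-module such that the natural restriction map End_S(T) → End_{eSe}(eT) is an isomorphism. If T is a double centraliser module for S, then eT is a double centraliser module for eSe. -/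
section Corner

variable {S : Type*} [Ring S]

/-- The corner subring `eSe` of a ring `S` at an (idempotent) element `e`, realised as the
non-unital subring `{x | e * x = x ∧ x * e = x}`. -/
def corner (e : S) : NonUnitalSubring S where
  carrier := {x | e * x = x ∧ x * e = x}
  zero_mem' := by simp
  add_mem' {a b} ha hb := ⟨by rw [mul_add, ha.1, hb.1], by rw [add_mul, ha.2, hb.2]⟩
  neg_mem' {a} ha := ⟨by rw [mul_neg, ha.1], by rw [neg_mul, ha.2]⟩
  mul_mem' {a b} ha hb := ⟨by rw [← mul_assoc, ha.1], by rw [mul_assoc, hb.2]⟩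

instance cornerOne (e : S) [hf : Fact (IsIdempotentElem e)] : One (corner e) :=
  ⟨⟨e, hf.out, hf.out⟩⟩

/-- For an idempotent `e`, the corner `eSe` is a ring with identity `e`. -/
instance cornerRing (e : S) [Fact (IsIdempotentElem e)] : Ring (corner e) :=
  { (inferInstance : NonUnitalRing (corner e)), cornerOne e with
    one_mul := fun a => Subtype.ext a.2.1
    mul_one := fun a => Subtype.ext a.2.2 }

variable (e : S) (T : Type*) [AddCommGroup T] [Module S T] [Fact (IsIdempotentElem e)]

/-- The corner module `eT = {t | e • t = t}` of an `S`-module `T`. -/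
def cornerMod : AddSubgroup T where
  carrier := {t | e • t = t}
  zero_mem' := by simp
  add_mem' {a b} ha hb := by simp only [Set.mem_setOf_eq, smul_add] at *; rw [ha, hb]
  neg_mem' {a} ha := by simp only [Set.mem_setOf_eq, smul_neg] at *; rw [ha]

/-- The module structure of `eT` over the corner ring `eSe`. -/
instance cornerModule : Module (corner e) ↥(cornerMod e T) where
  smul x t := ⟨x.1 • t.1, by
    show e • (x.1 • t.1) = x.1 • t.1
    rw [← mul_smul, x.2.1]⟩
  one_smul t := Subtype.ext (t.2 : e • t.1 = t.1)
  mul_smul x y t := Subtype.ext (mul_smul x.1 y.1 t.1)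
  smul_zero x := Subtype.ext (smul_zero x.1)
  smul_add x s t := Subtype.ext (smul_add x.1 s.1 t.1)
  add_smul x y t := Subtype.ext (add_smul x.1 y.1 t.1)
  zero_smul t := Subtype.ext (zero_smul S t.1)

/-- The natural restriction map `End_S(T) → End_{eSe}(eT)`, `g ↦ g|_{eT}`. -/
def restrictEnd (g : T →ₗ[S] T) : ↥(cornerMod e T) →ₗ[corner e] ↥(cornerMod e T) where
  toFun t := ⟨g t.1, by
    show e • g t.1 = g t.1
    rw [← map_smul, (t.2 : e • t.1 = t.1)]⟩
  map_add' s t := Subtype.ext (map_add g s.1 t.1)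
  map_smul' x t := Subtype.ext (map_smul g x.1 t.1)

end Corner

section CornerExtension

variable {S : Type*} [Ring S] (e : S) [Fact (IsIdempotentElem e)]

theorem mul_mul_mem_corner (s : S) : e * s * e ∈ corner e :=
  have hee : e * e = e := (Fact.out : IsIdempotentElem e)
  ⟨by rw [← mul_assoc, ← mul_assoc, hee], by rw [mul_assoc, mul_assoc, hee, ← mul_assoc]⟩

variable (T : Type*) [AddCommGroup T] [Module S T]

theorem smul_mem_cornerMod (t : T) : e • t ∈ cornerMod e T := by
  change e • e • t = e • t
  rw [← mul_smul, (Fact.out : IsIdempotentElem e).eq]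

def cornerProj : T →+ cornerMod e T where
  toFun t := ⟨e • t, smul_mem_cornerMod e T t⟩
  map_zero' := Subtype.ext (smul_zero e)
  map_add' s t := Subtype.ext (smul_add e s t)

variable {e T}

theorem cornerProj_of_mem (p : cornerMod e T) : cornerProj e T p = p :=
  Subtype.ext p.2

theorem restrictEnd_cornerProj (g : T →ₗ[S] T) (t : T) :
    restrictEnd e T g (cornerProj e T t) = cornerProj e T (g t) :=
  Subtype.ext (map_smul g e t)

theorem coe_corner_smul (x : corner e) (p : cornerMod e T) :
    ((x • p : cornerMod e T) : T) = (x : S) • (p : T) := rfl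

def cornerExtend (σ : cornerMod e T →+ cornerMod e T) : T →+ T :=
  (cornerMod e T).subtype.comp (σ.comp (cornerProj e T))

theorem cornerExtend_apply (σ : cornerMod e T →+ cornerMod e T) (t : T) :
    cornerExtend σ t = σ (cornerProj e T t) := rfl

theorem cornerExtend_comm {σ : cornerMod e T →+ cornerMod e T}
    (hσ : ∀ (α : cornerMod e T →ₗ[corner e] cornerMod e T) p, σ (α p) = α (σ p))
    (g : T →ₗ[S] T) (t : T) : cornerExtend σ (g t) = g (cornerExtend σ t) := by
  rw [cornerExtend_apply, ← restrictEnd_cornerProj, hσ]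
  rfl

theorem HasDCP.corner (hdcp : HasDCP S T) : HasDCP (corner e) (cornerMod e T) := by
  intro σ hσ
  obtain ⟨s, hs⟩ := hdcp (cornerExtend σ) (cornerExtend_comm hσ)
  have hσs (p : cornerMod e T) : (σ p : T) = s • (p : T) := by
    rw [← hs, cornerExtend_apply, cornerProj_of_mem]
  refine ⟨⟨e * s * e, mul_mul_mem_corner e s⟩, fun p => Subtype.ext ?_⟩
  rw [coe_corner_smul, mul_smul, mul_smul, p.2, ← hσs, (σ p).2]

end CornerExtension

theorem corner_hasDCP_general
    (S : Type*) [Ring S]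
    (T : Type*) [AddCommGroup T] [Module S T]
    (e : S) [Fact (IsIdempotentElem e)]
    (hdcp : HasDCP S T) :
    HasDCP (corner e) ↥(cornerMod e T) :=
  hdcp.corner

/-- **Proposition 5.2.** Let `S` be a finite-dimensional algebra over a field `F`, let `e` be a
nonzero idempotent of `S`, and let `T` be a finite-dimensional `S`-module such that the natural
restriction map `End_S(T) → End_{eSe}(eT)` is an isomorphism.  If `T` is a double centraliser
module for `S`, then `eT` is a double centraliser module for `eSe`. -/
theorem corner_hasDCP
    (F : Type*) [Field F] (S : Type*) [Ring S] [Algebra F S] [FiniteDimensional F S]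
    (T : Type*) [AddCommGroup T] [Module S T] [Module F T] [IsScalarTower F S T]
    [FiniteDimensional F T]
    (e : S) [Fact (IsIdempotentElem e)] (he0 : e ≠ 0)
    (hbij : Function.Bijective (fun g : T →ₗ[S] T => restrictEnd e T g))
    (hdcp : HasDCP S T) :
    HasDCP (corner e) ↥(cornerMod e T) :=
  corner_hasDCP_general S T e hdcp
end
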